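/- Suppose the single-via path P_{svt} via v has been verified to be T-locally optimal with T = α·l(P_{svt}), where the verification considered the subsection P_{xvy} of P_{svt} around v with d(x,v) ≥ α·l(P_{svt}) and d(v,y) ≥ α·l(P_{svt}). Then every single-via path P_{s~vt~} via v that contains P_{xvy} as a subpath and satisfies l(P_{s~vt~}) ≤ (1/γ)·l(P_{svt}), for γ ∈ (0,1], is (α·γ)-relative locally optimal. -/

import Mathlib

/-!
Measure positions on `P'` by the length travelled from its start. A subpath `q` of `P'` lying
inside one of the two shortest halves is itself shortest. Otherwise `q` passes through the
junction vertex `v`, and the interior of `q` is shorter than `α γ l(P') ≤ α l(P)`. The occurrence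
of `v` in `Q` sits at the same travelled length as the junction (the piece of a shortest path
between two copies of `v` has length `d(v,v) ≤ 0`), while `x` and `y` are at least `α l(P)`
away from it, so `q` cannot reach past `x` or `y`. Hence `q` is a subpath of `Q`, thus of `P`,
and the local optimality of `P` applies.
-/

open List

variable {V : Type*}

/-- Length (cost) of a path given as a list of vertices, with edge weights `c`. -/
def pLen (c : V → V → ℝ) : List V → ℝ
  | [] => 0
  | [_] => 0
  | a :: b :: rest => c a b + pLen c (b :: rest)

/-- The pInterior of a path: the path with its two endpoints removed. -/
def pInterior (p : List V) : List V := (p.drop 1).dropLast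

/-- A (nonempty) path is a shortest path if its length equals the shortest-path
distance `d` between its endpoints. -/
def IsShortestPath [Inhabited V] (c d : V → V → ℝ) (p : List V) : Prop :=
  p ≠ [] ∧ pLen c p = d p.headI p.getLastI

/-- A path is `T`-locally optimal if every `T`-significant subpath (a nonempty
infix whose pInterior has length `< T`) is a shortest path. -/
def TLocOpt [Inhabited V] (c d : V → V → ℝ) (T : ℝ) (p : List V) : Prop :=
  ∀ q : List V, q ≠ [] → q <:+: p → pLen c (pInterior q) < T → IsShortestPath c d q

def pSeg (R : List V) (i j : ℕ) : List V := (R.drop i).take (j + 1 - i)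

def prefixLen (c : V → V → ℝ) (R : List V) (j : ℕ) : ℝ := pLen c (R.take (j + 1))

section
variable {c d : V → V → ℝ}

lemma pLen_nonneg (hc : ∀ a b, 0 ≤ c a b) : ∀ p : List V, 0 ≤ pLen c p
  | [] => le_rfl
  | [_] => le_rfl
  | a :: b :: rest => add_nonneg (hc a b) (pLen_nonneg hc (b :: rest))

lemma pLen_append_cons (l : List V) (a : V) (m : List V) :
    pLen c (l ++ a :: m) = pLen c (l ++ [a]) + pLen c (a :: m) := by
  induction l with
  | nil => simp [pLen]
  | cons b l ih =>
    cases l with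
    | nil => simp [pLen]
    | cons e l => simp only [cons_append, pLen] at ih ⊢; rw [ih]; ring

lemma pLen_le_pLen_append (hc : ∀ a b, 0 ≤ c a b) (l r : List V) :
    pLen c l ≤ pLen c (l ++ r) := by
  rcases eq_nil_or_concat l with rfl | ⟨l, a, rfl⟩
  · exact pLen_nonneg hc r
  · rw [concat_eq_append, append_assoc, singleton_append, pLen_append_cons l a r]
    linarith [pLen_nonneg hc (a :: r)]

lemma prefixLen_mono (hc : ∀ a b, 0 ≤ c a b) (R : List V) : Monotone (prefixLen c R) := by
  intro j k hjk
  obtain ⟨n, rfl⟩ := Nat.exists_eq_add_of_le hjk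
  rw [prefixLen, prefixLen, show j + n + 1 = j + 1 + n by omega, take_add (i := j + 1)]
  exact pLen_le_pLen_append hc _ _

end

section
variable {R : List V} {i j : ℕ}

lemma pSeg_ne_nil (hij : i ≤ j) (hj : j < R.length) : pSeg R i j ≠ [] := by
  rw [← length_pos_iff, pSeg, length_take, length_drop]
  omega

lemma pSeg_infix_pSeg {a b : ℕ} (hai : a ≤ i) (hjb : j ≤ b) : pSeg R i j <:+: pSeg R a b := by
  have h : pSeg R i j = ((pSeg R a b).drop (i - a)).take (j + 1 - i) := by
    rw [pSeg, pSeg, drop_take, drop_drop, take_take, Nat.add_sub_cancel' hai]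
    congr 1
    omega
  rw [h]
  exact (take_prefix _ _).isInfix.trans (drop_suffix _ _).isInfix

lemma take_eq_pSeg (R : List V) (j : ℕ) : R.take (j + 1) = pSeg R 0 j := by
  simp [pSeg]

lemma drop_eq_pSeg (hi : i < R.length) : R.drop i = pSeg R i (R.length - 1) := by
  rw [pSeg, take_of_length_le (by simp; omega)]

lemma exists_pSeg_of_infix {q : List V} (hq : q ≠ []) (h : q <:+: R) :
    ∃ i j, i ≤ j ∧ j < R.length ∧ q = pSeg R i j := by
  obtain ⟨l₁, l₂, rfl⟩ := h
  have : 0 < q.length := length_pos_iff.mpr hq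
  refine ⟨l₁.length, l₁.length + q.length - 1, by omega, by simp; omega, ?_⟩
  simp [pSeg, show l₁.length + q.length - 1 + 1 - l₁.length = q.length by omega]

lemma pInterior_pSeg (hj : j < R.length) : pInterior (pSeg R i j) = pSeg R (i + 1) (j - 1) := by
  rw [pInterior, pSeg, pSeg, drop_take, drop_drop, dropLast_eq_take, length_take, take_take]
  congr 1
  simp only [length_drop]
  omega

end

lemma drop_length_sub_one_append_tail [Inhabited V] {l₁ l₂ : List V} (h₁ : l₁ ≠ []) (h₂ : l₂ ≠ [])
    (h : l₁.getLastI = l₂.headI) : (l₁ ++ l₂.tail).drop (l₁.length - 1) = l₂ := by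
  obtain ⟨l, a, rfl⟩ := (eq_nil_or_concat l₁).resolve_left h₁
  obtain ⟨b, l', rfl⟩ := exists_cons_of_ne_nil h₂
  simp only [getLastI_eq_getLast?_getD, concat_eq_append, getLast?_concat, Option.getD_some,
    headI_cons] at h
  simp [h]

section
variable {c d : V → V → ℝ} [Inhabited V] {R : List V} {i j : ℕ}

lemma pSeg_eq_cons (hij : i ≤ j) (hj : j < R.length) :
    pSeg R i j = R.getI i :: pSeg R (i + 1) j := by
  rw [pSeg, pSeg, drop_eq_getElem_cons (by omega), show j + 1 - i = j + 1 - (i + 1) + 1 by omega,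
    take_succ_cons, getI_eq_getElem]

lemma headI_pSeg (hij : i ≤ j) (hj : j < R.length) : (pSeg R i j).headI = R.getI i := by
  rw [pSeg_eq_cons hij hj, headI_cons]

lemma getLastI_pSeg (hij : i ≤ j) (hj : j < R.length) : (pSeg R i j).getLastI = R.getI j := by
  rw [getLastI_eq_getLast?_getD, pSeg, getLast?_take, if_neg (by omega), getElem?_drop,
    show i + (j + 1 - i - 1) = j by omega, getElem?_eq_getElem hj, Option.some_or,
    Option.getD_some, getI_eq_getElem]

lemma exists_mem_pSeg {v : V} (hv : v ∈ pSeg R i j) : ∃ k, i ≤ k ∧ k ≤ j ∧ R.getI k = v := by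
  obtain ⟨n, hn, rfl⟩ := mem_iff_getElem.mp hv
  simp only [pSeg, length_take, length_drop] at hn
  refine ⟨i + n, by omega, by omega, ?_⟩
  simp [pSeg, getI_eq_getElem _ (show i + n < R.length by omega)]

lemma pLen_pSeg (hij : i ≤ j) (hj : j < R.length) :
    pLen c (pSeg R i j) = prefixLen c R j - prefixLen c R i := by
  have hsplit : R.take (j + 1) = R.take i ++ R.getI i :: pSeg R (i + 1) j := by
    rw [← pSeg_eq_cons hij hj, pSeg, ← take_add, Nat.add_sub_cancel' (by omega)]
  have hhead : R.take (i + 1) = R.take i ++ [R.getI i] := by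
    rw [take_add_one, getElem?_eq_getElem (by omega), getI_eq_getElem, Option.toList_some]
  rw [prefixLen, prefixLen, hsplit, hhead, pLen_append_cons, ← pSeg_eq_cons hij hj]
  ring

lemma dist_le_prefixLen_sub (hlow : ∀ p : List V, p ≠ [] → d p.headI p.getLastI ≤ pLen c p)
    (hij : i ≤ j) (hj : j < R.length) :
    d (R.getI i) (R.getI j) ≤ prefixLen c R j - prefixLen c R i := by
  have h := hlow (pSeg R i j) (pSeg_ne_nil hij hj)
  rwa [headI_pSeg hij hj, getLastI_pSeg hij hj, pLen_pSeg hij hj] at h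

lemma IsShortestPath.isShortestPath_pSeg
    (hlow : ∀ p : List V, p ≠ [] → d p.headI p.getLastI ≤ pLen c p)
    (htri : ∀ a b e : V, d a e ≤ d a b + d b e) (hR : IsShortestPath c d R)
    (hij : i ≤ j) (hj : j < R.length) : IsShortestPath c d (pSeg R i j) := by
  have hn : 0 < R.length := by omega
  have hR' : pSeg R 0 (R.length - 1) = R := by
    rw [← take_eq_pSeg, Nat.sub_add_cancel hn, take_length]
  have hRlen : pLen c R = prefixLen c R (R.length - 1) - prefixLen c R 0 := by
    conv_lhs => rw [← hR']
    exact pLen_pSeg (Nat.zero_le _) (by omega)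
  have hhead : R.headI = R.getI 0 := by
    conv_lhs => rw [← hR']
    exact headI_pSeg (Nat.zero_le _) (by omega)
  have hlast : R.getLastI = R.getI (R.length - 1) := by
    conv_lhs => rw [← hR']
    exact getLastI_pSeg (Nat.zero_le _) (by omega)
  refine ⟨pSeg_ne_nil hij hj, le_antisymm ?_ (hlow _ (pSeg_ne_nil hij hj))⟩
  have h₁ := dist_le_prefixLen_sub hlow (Nat.zero_le i) (hij.trans_lt hj)
  have h₂ := dist_le_prefixLen_sub hlow (Nat.le_sub_one_of_lt hj) (Nat.sub_lt hn one_pos)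
  have h₃ := htri (R.getI 0) (R.getI i) (R.getI (R.length - 1))
  have h₄ := htri (R.getI i) (R.getI j) (R.getI (R.length - 1))
  rw [hR.2, hhead, hlast] at hRlen
  rw [pLen_pSeg hij hj, headI_pSeg hij hj, getLastI_pSeg hij hj]
  linarith

lemma IsShortestPath.infix (hlow : ∀ p : List V, p ≠ [] → d p.headI p.getLastI ≤ pLen c p)
    (htri : ∀ a b e : V, d a e ≤ d a b + d b e) (hR : IsShortestPath c d R)
    {q : List V} (hq : q ≠ []) (h : q <:+: R) : IsShortestPath c d q := by
  obtain ⟨i, j, hij, hj, rfl⟩ := exists_pSeg_of_infix hq h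
  exact hR.isShortestPath_pSeg hlow htri hij hj

lemma prefixLen_eq_of_isShortestPath_pSeg (hc : ∀ a b, 0 ≤ c a b)
    (hlow : ∀ p : List V, p ≠ [] → d p.headI p.getLastI ≤ pLen c p)
    (hij : i ≤ j) (hj : j < R.length) (hs : IsShortestPath c d (pSeg R i j))
    (hv : R.getI i = R.getI j) : prefixLen c R i = prefixLen c R j := by
  have hvv : d (R.getI j) (R.getI j) ≤ 0 := hlow [R.getI j] (cons_ne_nil _ _)
  have h := hs.2
  rw [pLen_pSeg hij hj, headI_pSeg hij hj, getLastI_pSeg hij hj, hv] at h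
  linarith [prefixLen_mono hc R hij]

lemma prefixLen_eq_of_getI_eq (hc : ∀ a b, 0 ≤ c a b)
    (hlow : ∀ p : List V, p ≠ [] → d p.headI p.getLastI ≤ pLen c p)
    (htri : ∀ a b e : V, d a e ≤ d a b + d b e) {m k : ℕ}
    (h₁ : IsShortestPath c d (pSeg R 0 m)) (h₂ : IsShortestPath c d (pSeg R m (R.length - 1)))
    (hm : m < R.length) (hk : k < R.length) (hv : R.getI k = R.getI m) :
    prefixLen c R k = prefixLen c R m := by
  rcases le_total k m with hkm | hmk
  · refine prefixLen_eq_of_isShortestPath_pSeg hc hlow hkm hm ?_ hv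
    exact h₁.infix hlow htri (pSeg_ne_nil hkm hm) (pSeg_infix_pSeg (Nat.zero_le k) le_rfl)
  · refine (prefixLen_eq_of_isShortestPath_pSeg hc hlow hmk hk ?_ hv.symm).symm
    exact h₂.infix hlow htri (pSeg_ne_nil hmk hk) (pSeg_infix_pSeg le_rfl (by omega))

lemma pSeg_infix_pSeg_of_le_dist (hc : ∀ a b, 0 ≤ c a b)
    (hlow : ∀ p : List V, p ≠ [] → d p.headI p.getLastI ≤ pLen c p)
    {a k b : ℕ} {T : ℝ} (hak : a ≤ k) (hkb : k ≤ b) (hb : b < R.length)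
    (hik : prefixLen c R (i + 1) ≤ prefixLen c R k) (hkj : prefixLen c R k ≤ prefixLen c R (j - 1))
    (hint : prefixLen c R (j - 1) - prefixLen c R (i + 1) < T)
    (hx : T ≤ d (R.getI a) (R.getI k)) (hy : T ≤ d (R.getI k) (R.getI b)) :
    pSeg R i j <:+: pSeg R a b := by
  refine pSeg_infix_pSeg ?_ ?_
  · by_contra! h
    have := dist_le_prefixLen_sub hlow hak (hkb.trans_lt hb)
    have := prefixLen_mono hc R (show i + 1 ≤ a by omega)
    linarith
  · by_contra! h
    have := dist_le_prefixLen_sub hlow hkb hb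
    have := prefixLen_mono hc R (show b ≤ j - 1 by omega)
    linarith

end

theorem stmt9_general [Inhabited V] (c d : V → V → ℝ) (hc : ∀ a b, 0 ≤ c a b)
    (hlow : ∀ p : List V, p ≠ [] → d p.headI p.getLastI ≤ pLen c p)
    (htri : ∀ a b e : V, d a e ≤ d a b + d b e)
    (α γ : ℝ) (hα0 : 0 < α) (hγ0 : 0 < γ)
    (v x y : V)
    (P : List V)
    -- `P` is verified T-locally optimal with `T = α·l(P)`
    (hTLO : TLocOpt c d (α * pLen c P) P)
    -- `Q = P_xvy` is the verified section around `v`, with endpoints far from `v`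
    (Q : List V) (hQne : Q ≠ []) (hQP : Q <:+: P)
    (hQx : Q.headI = x) (hQy : Q.getLastI = y) (hvQ : v ∈ Q)
    (hdx : α * pLen c P ≤ d x v) (hdy : α * pLen c P ≤ d v y)
    -- `P'` is the single-via path via `v` for `(s',t')` containing `Q`
    (q1 q2 P' : List V)
    (hq1 : IsShortestPath c d q1) (hq1l : q1.getLastI = v)
    (hq2 : IsShortestPath c d q2) (hq2h : q2.headI = v)
    (hP' : P' = q1 ++ q2.tail)
    (hQP' : Q <:+: P')
    -- length constraint
    (hlen : pLen c P' ≤ (1 / γ) * pLen c P) :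
    TLocOpt c d (α * γ * pLen c P') P' := by
  intro q hq hqP' hqint
  have hT : α * γ * pLen c P' ≤ α * pLen c P := by
    rw [one_div_mul_eq_div, le_div_iff₀' hγ0] at hlen
    rw [mul_assoc]
    exact mul_le_mul_of_nonneg_left hlen hα0.le
  replace hqint := hqint.trans_le hT
  have hq1pos : 0 < q1.length := length_pos_iff.mpr hq1.1
  set m := q1.length - 1
  have hm : m < P'.length := by rw [hP', length_append]; omega
  have hq1P' : pSeg P' 0 m = q1 := by
    rw [← take_eq_pSeg, Nat.sub_add_cancel hq1pos, hP', take_left]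
  have hq2P' : pSeg P' m (P'.length - 1) = q2 := by
    rw [← drop_eq_pSeg hm, hP', drop_length_sub_one_append_tail hq1.1 hq2.1 (hq1l.trans hq2h.symm)]
  have hvm : P'.getI m = v := by rw [← getLastI_pSeg (Nat.zero_le m) hm, hq1P', hq1l]
  rw [← hq1P'] at hq1
  rw [← hq2P'] at hq2
  obtain ⟨i, j, hij, hj, rfl⟩ := exists_pSeg_of_infix hq hqP'
  rcases le_or_gt j m with hjm | hmj
  · exact hq1.infix hlow htri hq (pSeg_infix_pSeg (Nat.zero_le i) hjm)
  rcases le_or_gt m i with hmi | him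
  · exact hq2.infix hlow htri hq (pSeg_infix_pSeg hmi (by omega))
  obtain ⟨a, b, hab, hb, rfl⟩ := exists_pSeg_of_infix hQne hQP'
  obtain ⟨k, hak, hkb, rfl⟩ := exists_mem_pSeg hvQ
  have hkm := prefixLen_eq_of_getI_eq hc hlow htri hq1 hq2 hm (hkb.trans_lt hb) hvm.symm
  rw [headI_pSeg hab hb] at hQx
  rw [getLastI_pSeg hab hb] at hQy
  subst hQx hQy
  refine hTLO _ hq (IsInfix.trans ?_ hQP) hqint
  rw [pInterior_pSeg hj, pLen_pSeg (by omega) (by omega)] at hqint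
  exact pSeg_infix_pSeg_of_le_dist hc hlow hak hkb hb
    (hkm ▸ prefixLen_mono hc P' (show i + 1 ≤ m by omega))
    (hkm ▸ prefixLen_mono hc P' (show m ≤ j - 1 by omega)) hqint hdx hdy

/-- If the via path `P = P_svt` is `T`-locally optimal with
`T = α·l(P)`, verified on the section `P_xvy` around `v` with
`d(x,v) ≥ T` and `d(v,y) ≥ T`, then every via path `P'` via `v` containing
`P_xvy` with `l(P') ≤ (1/γ)·l(P)` (for `γ ∈ (0,1]`) is `(α·γ)`-relative
locally optimal. -/
theorem stmt9 [Inhabited V] (c d : V → V → ℝ) (hc : ∀ a b, 0 ≤ c a b)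
    (hlow : ∀ p : List V, p ≠ [] → d p.headI p.getLastI ≤ pLen c p)
    (htri : ∀ a b e : V, d a e ≤ d a b + d b e)
    (α γ : ℝ) (hα0 : 0 < α) (hα1 : α ≤ 1) (hγ0 : 0 < γ) (hγ1 : γ ≤ 1)
    (s t s' t' v x y : V)
    -- `P` is the single-via path via `v` for `(s,t)`
    (p1 p2 P : List V)
    (hp1 : IsShortestPath c d p1) (hp1h : p1.headI = s) (hp1l : p1.getLastI = v)
    (hp2 : IsShortestPath c d p2) (hp2h : p2.headI = v) (hp2l : p2.getLastI = t)
    (hP : P = p1 ++ p2.tail)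
    -- `P` is verified T-locally optimal with `T = α·l(P)`
    (hTLO : TLocOpt c d (α * pLen c P) P)
    -- `Q = P_xvy` is the verified section around `v`, with endpoints far from `v`
    (Q : List V) (hQne : Q ≠ []) (hQP : Q <:+: P)
    (hQx : Q.headI = x) (hQy : Q.getLastI = y) (hvQ : v ∈ Q)
    (hdx : α * pLen c P ≤ d x v) (hdy : α * pLen c P ≤ d v y)
    -- `P'` is the single-via path via `v` for `(s',t')` containing `Q`
    (q1 q2 P' : List V)
    (hq1 : IsShortestPath c d q1) (hq1h : q1.headI = s') (hq1l : q1.getLastI = v)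
    (hq2 : IsShortestPath c d q2) (hq2h : q2.headI = v) (hq2l : q2.getLastI = t')
    (hP' : P' = q1 ++ q2.tail)
    (hQP' : Q <:+: P')
    -- length constraint
    (hlen : pLen c P' ≤ (1 / γ) * pLen c P) :
    TLocOpt c d (α * γ * pLen c P') P' :=
  stmt9_general c d hc hlow htri α γ hα0 hγ0 v x y P hTLO Q hQne hQP hQx hQy hvQ hdx hdy q1 q2 P'
    hq1 hq1l hq2 hq2h hP' hQP' hlen
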